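/- arXiv:2009.13586 — 3 statements merged into one kernel-verified Lean document; each statement's English description precedes it below -/
import Mathlib

section
/- Let $s, y \in \mathbb{R}^d$ with $s \neq 0$, and let $B_t$ be a symmetric $d \times d$ matrix. Among all symmetric matrices $B$ satisfying the weak secant equation $s^T B s = s^T y$, the minimizer of the Frobenius norm $\|B - B_t\|_F$ over matrices of the form $B = B_t + \lambda\,\mathrm{Diag}(s^2)$ for $\lambda \in \mathbb{R}$ is given by $B_{t+1} = B_t + \frac{s^T y - s^T B_t s}{\|s\|_4^4} \mathrm{Diag}(s^2)$, and this matrix satisfies the weak secant equation. -/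
/-!
Along the ray `B_t + λ Diag(s²)` the weak secant residual is affine in `λ`,
`sᵀ(B_t + λ Diag(s²))s = sᵀB_t s + λ ‖s‖₄⁴`, with nonzero slope `‖s‖₄⁴` when `s ≠ 0`.
So exactly one `λ` satisfies the weak secant equation, and the minimization is over a
single point.
-/

open Matrix Finset

theorem sum_pow_four_ne_zero {ι R : Type*} [Fintype ι] [Field R] [LinearOrder R]
    [IsStrictOrderedRing R] {s : ι → R} (hs : s ≠ 0) : ∑ i, s i ^ 4 ≠ 0 := by
  contrapose! hs
  ext i
  simpa using (sum_eq_zero_iff_of_nonneg fun j _ => by positivity).mp hs i (mem_univ i)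

section

variable {ι R : Type*} [Fintype ι] [DecidableEq ι]

theorem dotProduct_diagonal_sq_mulVec [CommSemiring R] (s : ι → R) :
    s ⬝ᵥ diagonal (fun i => s i ^ 2) *ᵥ s = ∑ i, s i ^ 4 := by
  simp only [mulVec_diagonal, dotProduct]
  exact sum_congr rfl fun i _ => by ring

theorem dotProduct_add_smul_diagonal_sq_mulVec [CommSemiring R] (B : Matrix ι ι R)
    (s : ι → R) (c : R) :
    s ⬝ᵥ (B + c • diagonal (fun i => s i ^ 2)) *ᵥ s = s ⬝ᵥ B *ᵥ s + c * ∑ i, s i ^ 4 := by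
  rw [add_mulVec, dotProduct_add, smul_mulVec, dotProduct_smul, smul_eq_mul,
    dotProduct_diagonal_sq_mulVec]

theorem weakSecant_add_smul_diagonal_sq_iff [Field R] (B : Matrix ι ι R) {s : ι → R}
    (hs : ∑ i, s i ^ 4 ≠ 0) (y : ι → R) (c : R) :
    s ⬝ᵥ (B + c • diagonal (fun i => s i ^ 2)) *ᵥ s = s ⬝ᵥ y ↔
      c = (s ⬝ᵥ y - s ⬝ᵥ B *ᵥ s) / ∑ i, s i ^ 4 := by
  rw [dotProduct_add_smul_diagonal_sq_mulVec, eq_div_iff hs, eq_sub_iff_add_eq']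

end

theorem apollo_weak_secant_minimizer_general {n : ℕ} (s y : Fin n → ℝ) (hs : s ≠ 0)
    (Bt : Matrix (Fin n) (Fin n) ℝ) :
    (s ⬝ᵥ (Bt + ((s ⬝ᵥ y - s ⬝ᵥ Bt.mulVec s) / (∑ i, s i ^ 4)) •
        Matrix.diagonal (fun i => s i ^ 2)).mulVec s = s ⬝ᵥ y) ∧
    ∀ lam : ℝ,
      s ⬝ᵥ (Bt + lam • Matrix.diagonal (fun i => s i ^ 2)).mulVec s = s ⬝ᵥ y →
      ∑ i, ∑ j,
          ((Bt + ((s ⬝ᵥ y - s ⬝ᵥ Bt.mulVec s) / (∑ k, s k ^ 4)) •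
              Matrix.diagonal (fun k => s k ^ 2)) i j - Bt i j) ^ 2 ≤
        ∑ i, ∑ j,
          ((Bt + lam • Matrix.diagonal (fun k => s k ^ 2)) i j - Bt i j) ^ 2 := by
  have hsecant := weakSecant_add_smul_diagonal_sq_iff Bt (sum_pow_four_ne_zero hs) y
  refine ⟨(hsecant _).mpr rfl, fun lam hlam => ?_⟩
  rw [(hsecant lam).mp hlam]

/-- Among symmetric matrices of the form `B_t + λ Diag(s²)` satisfying the
weak secant equation `sᵀ B s = sᵀ y`, the Frobenius-norm minimizer is
`B_t + ((sᵀy - sᵀB_t s)/‖s‖₄⁴) Diag(s²)`, and it satisfies the weak secant equation. -/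
theorem apollo_weak_secant_minimizer {n : ℕ} (s y : Fin n → ℝ) (hs : s ≠ 0)
    (Bt : Matrix (Fin n) (Fin n) ℝ) (hBt : Bt.IsSymm) :
    (s ⬝ᵥ (Bt + ((s ⬝ᵥ y - s ⬝ᵥ Bt.mulVec s) / (∑ i, s i ^ 4)) •
        Matrix.diagonal (fun i => s i ^ 2)).mulVec s = s ⬝ᵥ y) ∧
    ∀ lam : ℝ,
      s ⬝ᵥ (Bt + lam • Matrix.diagonal (fun i => s i ^ 2)).mulVec s = s ⬝ᵥ y →
      ∑ i, ∑ j,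
          ((Bt + ((s ⬝ᵥ y - s ⬝ᵥ Bt.mulVec s) / (∑ k, s k ^ 4)) •
              Matrix.diagonal (fun k => s k ^ 2)) i j - Bt i j) ^ 2 ≤
        ∑ i, ∑ j,
          ((Bt + lam • Matrix.diagonal (fun k => s k ^ 2)) i j - Bt i j) ^ 2 :=
  apollo_weak_secant_minimizer_general s y hs Bt
end

section
/- (Coupled stepsize and convexity, inductive step) Consider the Apollo recursion and two hyper-parameter settings $(\eta, \sigma)$ and $(\alpha\eta, \alpha\sigma)$ with $\alpha > 0$. Suppose at step $t$ we have $\theta'_t = \theta_t$, $m'_t = m_t$, $B'_t = \alpha B_t$, and $d'_t = \frac{1}{\alpha} d_t$ with $d_t \neq 0$. Then $m'_{t+1} = m_{t+1}$, $B'_{t+1} = \alpha B_{t+1}$, $D'_{t+1} = \alpha D_{t+1}$, $d'_{t+1} = \frac{1}{\alpha} d_{t+1}$, and $\theta'_{t+1} = \theta_{t+1}$. -/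
/-!
The primed run is the unprimed one with every quantity rescaled by a power of `α`: the
weak-secant correction of `B` is homogeneous of degree one under `(B, d) ↦ (α B, d / α)`,
since the numerator scales by `α⁻¹` and `‖d‖₄⁴` by `α⁻⁴`, so `B' = α B`; rectification is
positively homogeneous, so `D' = α D` once the threshold is scaled to `ασ`; hence
`d' = d / α` and the step `αη d'` equals `η d`.
-/

open Finset

section WeakSecant

variable {ι K : Type*} [Fintype ι] [Field K]

/-- The diagonal weak-secant update of Apollo:
`B - (dᵀy + dᵀ B d) / ‖d‖₄⁴ • Diag(d²)`, with `y = m_{t+1} - m_t`. -/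
def weakSecantUpdate (B d y : ι → K) : ι → K :=
  fun i => B i - ((∑ j, d j * y j) + ∑ j, B j * d j ^ 2) / (∑ j, d j ^ 4) * d i ^ 2

theorem weakSecantUpdate_smul_smul_inv {α : K} (hα : α ≠ 0) (B d y : ι → K) :
    weakSecantUpdate (α • B) (α⁻¹ • d) y = α • weakSecantUpdate B d y := by
  have hdy : ∑ j, (α⁻¹ • d) j * y j = α⁻¹ * ∑ j, d j * y j := by
    simp only [mul_sum, Pi.smul_apply, smul_eq_mul, mul_assoc]
  have hBd : ∑ j, (α • B) j * (α⁻¹ • d) j ^ 2 = α⁻¹ * ∑ j, B j * d j ^ 2 := by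
    rw [mul_sum]
    refine sum_congr rfl fun j _ => ?_
    simp only [Pi.smul_apply, smul_eq_mul]
    field_simp
  have hd4 : ∑ j, (α⁻¹ • d) j ^ 4 = α⁻¹ ^ 4 * ∑ j, d j ^ 4 := by
    simp only [mul_sum, Pi.smul_apply, smul_eq_mul, mul_pow]
  funext i
  simp only [weakSecantUpdate]
  rw [hdy, hBd, hd4, ← mul_add]
  simp only [weakSecantUpdate, Pi.smul_apply, smul_eq_mul]
  field_simp

end WeakSecant

section Rectify

variable {ι K : Type*} [Field K] [LinearOrder K] [IsStrictOrderedRing K]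

def rectify (B : ι → K) (σ : K) : ι → K :=
  fun i => max |B i| σ

theorem rectify_smul {α : K} (hα : 0 ≤ α) (B : ι → K) (σ : K) :
    rectify (α • B) (α * σ) = α • rectify B σ := by
  funext i
  simp only [rectify, Pi.smul_apply, smul_eq_mul, abs_mul, abs_of_nonneg hα,
    mul_max_of_nonneg _ _ hα]

end Rectify

theorem apollo_coupled_inductive_step_general {n : ℕ}
    (gradf : (Fin n → ℝ) → (Fin n → ℝ))
    (β η σ α : ℝ) (hα : 0 < α) (t : ℕ)
    (θt mt Bt dt θt' mt' Bt' dt' : Fin n → ℝ)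
    (hθeq : θt' = θt) (hmeq : mt' = mt) (hBeq : Bt' = α • Bt)
    (hdeq : dt' = (1 / α) • dt)
    (m1 B1 D1 d1 θ1 m1' B1' D1' d1' θ1' : Fin n → ℝ)
    -- unprimed recursion with (η, σ)
    (hm1 : m1 = (β * (1 - β ^ t) / (1 - β ^ (t + 1))) • mt +
      ((1 - β) / (1 - β ^ (t + 1))) • gradf θt)
    (hB1 : B1 = fun i => Bt i -
      ((∑ j, dt j * (m1 j - mt j)) + ∑ j, Bt j * dt j ^ 2) / (∑ j, dt j ^ 4) * dt i ^ 2)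
    (hD1 : D1 = fun i => max |B1 i| σ)
    (hd1 : d1 = fun i => m1 i / D1 i)
    (hθ1 : θ1 = θt - η • d1)
    -- primed recursion with (αη, ασ)
    (hm1' : m1' = (β * (1 - β ^ t) / (1 - β ^ (t + 1))) • mt' +
      ((1 - β) / (1 - β ^ (t + 1))) • gradf θt')
    (hB1' : B1' = fun i => Bt' i -
      ((∑ j, dt' j * (m1' j - mt' j)) + ∑ j, Bt' j * dt' j ^ 2) / (∑ j, dt' j ^ 4) *
        dt' i ^ 2)
    (hD1' : D1' = fun i => max |B1' i| (α * σ))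
    (hd1' : d1' = fun i => m1' i / D1' i)
    (hθ1' : θ1' = θt' - (α * η) • d1') :
    m1' = m1 ∧ B1' = α • B1 ∧ D1' = α • D1 ∧ d1' = (1 / α) • d1 ∧ θ1' = θ1 := by
  subst θt' mt' Bt' dt'
  rw [one_div] at hB1' ⊢
  have hm : m1' = m1 := by rw [hm1', hm1]
  have hB : B1' = α • B1 := by
    rw [show B1' = weakSecantUpdate (α • Bt) (α⁻¹ • dt) (m1' - mt) from hB1', hm,
      weakSecantUpdate_smul_smul_inv hα.ne', hB1]
    rfl
  have hD : D1' = α • D1 := by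
    rw [show D1' = rectify B1' (α * σ) from hD1', hB, rectify_smul hα.le, hD1]
    rfl
  have hd : d1' = α⁻¹ • d1 := by
    funext i
    simp only [hd1', hd1, hm, hD, Pi.smul_apply, smul_eq_mul]
    ring
  refine ⟨hm, hB, hD, hd, ?_⟩
  rw [hθ1', hθ1, hd, smul_smul, mul_right_comm, mul_inv_cancel₀ hα.ne', one_mul]

/-- Coupled stepsize and convexity, inductive step. If at step `t` the
two Apollo runs with hyper-parameters `(η, σ)` and `(αη, ασ)` satisfy `θ'_t = θ_t`,
`m'_t = m_t`, `B'_t = α B_t`, `d'_t = d_t/α` with `d_t ≠ 0`, then the same relations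
hold at step `t+1` (diagonal matrices represented by their diagonal-entry vectors). -/
theorem apollo_coupled_inductive_step {n : ℕ}
    (gradf : (Fin n → ℝ) → (Fin n → ℝ))
    (β η σ α : ℝ) (hβ0 : 0 < β) (hβ1 : β < 1)
    (hη : 0 < η) (hσ : 0 < σ) (hα : 0 < α) (t : ℕ)
    (θt mt Bt dt θt' mt' Bt' dt' : Fin n → ℝ)
    (hθeq : θt' = θt) (hmeq : mt' = mt) (hBeq : Bt' = α • Bt)
    (hdeq : dt' = (1 / α) • dt) (hdt : dt ≠ 0)
    (m1 B1 D1 d1 θ1 m1' B1' D1' d1' θ1' : Fin n → ℝ)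
    -- unprimed recursion with (η, σ)
    (hm1 : m1 = (β * (1 - β ^ t) / (1 - β ^ (t + 1))) • mt +
      ((1 - β) / (1 - β ^ (t + 1))) • gradf θt)
    (hB1 : B1 = fun i => Bt i -
      ((∑ j, dt j * (m1 j - mt j)) + ∑ j, Bt j * dt j ^ 2) / (∑ j, dt j ^ 4) * dt i ^ 2)
    (hD1 : D1 = fun i => max |B1 i| σ)
    (hd1 : d1 = fun i => m1 i / D1 i)
    (hθ1 : θ1 = θt - η • d1)
    -- primed recursion with (αη, ασ)
    (hm1' : m1' = (β * (1 - β ^ t) / (1 - β ^ (t + 1))) • mt' +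
      ((1 - β) / (1 - β ^ (t + 1))) • gradf θt')
    (hB1' : B1' = fun i => Bt' i -
      ((∑ j, dt' j * (m1' j - mt' j)) + ∑ j, Bt' j * dt' j ^ 2) / (∑ j, dt' j ^ 4) *
        dt' i ^ 2)
    (hD1' : D1' = fun i => max |B1' i| (α * σ))
    (hd1' : d1' = fun i => m1' i / D1' i)
    (hθ1' : θ1' = θt' - (α * η) • d1') :
    m1' = m1 ∧ B1' = α • B1 ∧ D1' = α • D1 ∧ d1' = (1 / α) • d1 ∧ θ1' = θ1 :=
  apollo_coupled_inductive_step_general gradf β η σ α hα t θt mt Bt dt θt' mt' Bt' dt' hθeq hmeq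
    hBeq hdeq m1 B1 D1 d1 θ1 m1' B1' D1' d1' θ1' hm1 hB1 hD1 hd1 hθ1 hm1' hB1' hD1' hd1' hθ1'
end

section
/- (Theorem 1, full scale invariance) Consider the Apollo recursion with zero initialization $m_0 = d_0 = 0$, $B_0 = 0$, fixed initialization $\theta_0$, and two hyper-parameter settings $(\eta, \sigma)$ and $(\eta', \sigma')$ with $\eta/\sigma = \eta'/\sigma'$ (all positive). Then the parameter trajectories coincide: $\theta_t = \theta'_t$ for all $t \ge 1$. -/
open Finset

/-!
Rescaling `(η, σ)` to `(α η, α σ)` with `α > 0` multiplies the curvature estimate by `α` and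
divides the direction by `α`: the quasi-Newton update of `B` is homogeneous of degree one under
`(B, d) ↦ (α B, d / α)`, and `max (α |B|) (α σ) = α max |B| σ`. Hence the step `η d` is
unchanged, and the momentum, which only sees the gradients along the trajectory, is the same
in both runs.
-/

section Apollo

variable {ι : Type*}

/-- Here `Δm` plays the role of `m_{t+1} - m_t`. -/
noncomputable def apolloCurvature [Fintype ι] (B d Δm : ι → ℝ) : ι → ℝ :=
  if d = 0 then B else fun i =>
    B i - ((∑ j, d j * Δm j) + ∑ j, B j * d j ^ 2) / (∑ j, d j ^ 4) * d i ^ 2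

noncomputable def apolloDirection (σ : ℝ) (B m : ι → ℝ) : ι → ℝ :=
  fun i => m i / max |B i| σ

theorem apolloCurvature_smul [Fintype ι] {α : ℝ} (hα : α ≠ 0) (B d Δm : ι → ℝ) :
    apolloCurvature (α • B) (α⁻¹ • d) Δm = α • apolloCurvature B d Δm := by
  by_cases hd : d = 0
  · simp [apolloCurvature, hd]
  have hd' : α⁻¹ • d ≠ 0 := smul_ne_zero (inv_ne_zero hα) hd
  simp only [apolloCurvature, if_neg hd, if_neg hd']
  funext i
  have hdΔm : ∑ j, α⁻¹ * d j * Δm j = α⁻¹ * ∑ j, d j * Δm j := by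
    simp only [mul_assoc, Finset.mul_sum]
  have hBd : ∑ j, α * B j * (α⁻¹ * d j) ^ 2 = α⁻¹ * ∑ j, B j * d j ^ 2 := by
    rw [Finset.mul_sum]
    exact Finset.sum_congr rfl fun j _ => by field_simp
  have hd4 : ∑ j, (α⁻¹ * d j) ^ 4 = α⁻¹ ^ 4 * ∑ j, d j ^ 4 := by
    simp only [mul_pow, Finset.mul_sum]
  simp only [Pi.smul_apply, smul_eq_mul, hdΔm, hBd, hd4]
  field_simp

theorem apolloDirection_smul {α : ℝ} (hα : 0 < α) (σ : ℝ) (B m : ι → ℝ) :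
    apolloDirection (α * σ) (α • B) m = α⁻¹ • apolloDirection σ B m := by
  funext i
  simp only [apolloDirection, Pi.smul_apply, smul_eq_mul, abs_mul, abs_of_pos hα,
    ← mul_max_of_nonneg _ _ hα.le, mul_inv, div_eq_mul_inv]
  ring

end Apollo

theorem exists_pos_scale_of_div_eq {η σ η' σ' : ℝ} (hσ : 0 < σ) (hσ' : 0 < σ')
    (hratio : η / σ = η' / σ') : ∃ α : ℝ, 0 < α ∧ η' = α * η ∧ σ' = α * σ := by
  refine ⟨σ' / σ, div_pos hσ' hσ, ?_, (div_mul_cancel₀ σ' hσ.ne').symm⟩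
  field_simp at hratio ⊢
  linarith

theorem apollo_scale_invariance_general {n : ℕ}
    (gradf : (Fin n → ℝ) → (Fin n → ℝ))
    (β η σ η' σ' : ℝ)
    (hσ : 0 < σ) (hσ' : 0 < σ')
    (hratio : η / σ = η' / σ')
    (θ0 : Fin n → ℝ)
    (m d B D θ m' d' B' D' θ' : ℕ → (Fin n → ℝ))
    (hm0 : m 0 = 0) (hd0 : d 0 = 0) (hB0 : B 0 = 0) (hθ0 : θ 0 = θ0)
    (hm0' : m' 0 = 0) (hd0' : d' 0 = 0) (hB0' : B' 0 = 0) (hθ0' : θ' 0 = θ0)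
    -- unprimed recursion with (η, σ)
    (hm : ∀ t, m (t + 1) = (β * (1 - β ^ t) / (1 - β ^ (t + 1))) • m t +
      ((1 - β) / (1 - β ^ (t + 1))) • gradf (θ t))
    (hB : ∀ t, B (t + 1) = if d t = 0 then B t else fun i => B t i -
      ((∑ j, d t j * (m (t + 1) j - m t j)) + ∑ j, B t j * d t j ^ 2) /
        (∑ j, d t j ^ 4) * d t i ^ 2)
    (hD : ∀ t, D (t + 1) = fun i => max |B (t + 1) i| σ)
    (hd : ∀ t, d (t + 1) = fun i => m (t + 1) i / D (t + 1) i)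
    (hθ : ∀ t, θ (t + 1) = θ t - η • d (t + 1))
    -- primed recursion with (η', σ')
    (hm' : ∀ t, m' (t + 1) = (β * (1 - β ^ t) / (1 - β ^ (t + 1))) • m' t +
      ((1 - β) / (1 - β ^ (t + 1))) • gradf (θ' t))
    (hB' : ∀ t, B' (t + 1) = if d' t = 0 then B' t else fun i => B' t i -
      ((∑ j, d' t j * (m' (t + 1) j - m' t j)) + ∑ j, B' t j * d' t j ^ 2) /
        (∑ j, d' t j ^ 4) * d' t i ^ 2)
    (hD' : ∀ t, D' (t + 1) = fun i => max |B' (t + 1) i| σ')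
    (hd' : ∀ t, d' (t + 1) = fun i => m' (t + 1) i / D' (t + 1) i)
    (hθ' : ∀ t, θ' (t + 1) = θ' t - η' • d' (t + 1)) :
    ∀ t : ℕ, 1 ≤ t → θ t = θ' t := by
  obtain ⟨α, hα, rfl, rfl⟩ := exists_pos_scale_of_div_eq hσ hσ' hratio
  have hBc : ∀ t, B (t + 1) = apolloCurvature (B t) (d t) (m (t + 1) - m t) := hB
  have hBc' : ∀ t, B' (t + 1) = apolloCurvature (B' t) (d' t) (m' (t + 1) - m' t) := hB'
  have hdc : ∀ t, d (t + 1) = apolloDirection σ (B (t + 1)) (m (t + 1)) := fun t => by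
    rw [hd t, hD t]; rfl
  have hdc' : ∀ t, d' (t + 1) = apolloDirection (α * σ) (B' (t + 1)) (m' (t + 1)) := fun t => by
    rw [hd' t, hD' t]; rfl
  have key : ∀ t, m' t = m t ∧ B' t = α • B t ∧ d' t = α⁻¹ • d t ∧ θ' t = θ t := by
    intro t
    induction t with
    | zero => simp [hm0, hd0, hB0, hθ0, hm0', hd0', hB0', hθ0']
    | succ t ih =>
      obtain ⟨hmt, hBt, hdt, hθt⟩ := ih
      have hm₁ : m' (t + 1) = m (t + 1) := by rw [hm' t, hm t, hmt, hθt]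
      have hB₁ : B' (t + 1) = α • B (t + 1) := by
        rw [hBc' t, hBc t, hBt, hdt, hm₁, hmt, apolloCurvature_smul hα.ne']
      have hd₁ : d' (t + 1) = α⁻¹ • d (t + 1) := by
        rw [hdc' t, hdc t, hB₁, hm₁, apolloDirection_smul hα]
      refine ⟨hm₁, hB₁, hd₁, ?_⟩
      rw [hθ' t, hθ t, hθt, hd₁, mul_comm, mul_smul, smul_inv_smul₀ hα.ne']
  exact fun t _ => (key t).2.2.2.symm

/-- Theorem 1 (full scale invariance of Apollo). With zero initialization
and two hyper-parameter settings `(η, σ)` and `(η', σ')` with `η/σ = η'/σ'` (all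
positive), the Apollo parameter trajectories coincide: `θ_t = θ'_t` for all `t ≥ 1`.
(Diagonal matrices are represented by their diagonal-entry vectors.) -/
theorem apollo_scale_invariance {n : ℕ}
    (gradf : (Fin n → ℝ) → (Fin n → ℝ))
    (β η σ η' σ' : ℝ) (hβ0 : 0 < β) (hβ1 : β < 1)
    (hη : 0 < η) (hσ : 0 < σ) (hη' : 0 < η') (hσ' : 0 < σ')
    (hratio : η / σ = η' / σ')
    (θ0 : Fin n → ℝ)
    (m d B D θ m' d' B' D' θ' : ℕ → (Fin n → ℝ))
    (hm0 : m 0 = 0) (hd0 : d 0 = 0) (hB0 : B 0 = 0) (hθ0 : θ 0 = θ0)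
    (hm0' : m' 0 = 0) (hd0' : d' 0 = 0) (hB0' : B' 0 = 0) (hθ0' : θ' 0 = θ0)
    -- unprimed recursion with (η, σ)
    (hm : ∀ t, m (t + 1) = (β * (1 - β ^ t) / (1 - β ^ (t + 1))) • m t +
      ((1 - β) / (1 - β ^ (t + 1))) • gradf (θ t))
    (hB : ∀ t, B (t + 1) = if d t = 0 then B t else fun i => B t i -
      ((∑ j, d t j * (m (t + 1) j - m t j)) + ∑ j, B t j * d t j ^ 2) /
        (∑ j, d t j ^ 4) * d t i ^ 2)
    (hD : ∀ t, D (t + 1) = fun i => max |B (t + 1) i| σ)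
    (hd : ∀ t, d (t + 1) = fun i => m (t + 1) i / D (t + 1) i)
    (hθ : ∀ t, θ (t + 1) = θ t - η • d (t + 1))
    -- primed recursion with (η', σ')
    (hm' : ∀ t, m' (t + 1) = (β * (1 - β ^ t) / (1 - β ^ (t + 1))) • m' t +
      ((1 - β) / (1 - β ^ (t + 1))) • gradf (θ' t))
    (hB' : ∀ t, B' (t + 1) = if d' t = 0 then B' t else fun i => B' t i -
      ((∑ j, d' t j * (m' (t + 1) j - m' t j)) + ∑ j, B' t j * d' t j ^ 2) /
        (∑ j, d' t j ^ 4) * d' t i ^ 2)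
    (hD' : ∀ t, D' (t + 1) = fun i => max |B' (t + 1) i| σ')
    (hd' : ∀ t, d' (t + 1) = fun i => m' (t + 1) i / D' (t + 1) i)
    (hθ' : ∀ t, θ' (t + 1) = θ' t - η' • d' (t + 1)) :
    ∀ t : ℕ, 1 ≤ t → θ t = θ' t :=
  apollo_scale_invariance_general gradf β η σ η' σ' hσ hσ' hratio θ0 m d B D θ m' d' B' D' θ' hm0
    hd0 hB0 hθ0 hm0' hd0' hB0' hθ0' hm hB hD hd hθ hm' hB' hD' hd' hθ'
end
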